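/- For every x ∈ (0,∞) the limit M(x) = lim_{k→∞} M_{k,k}(x) exists as a positive real number, and the resulting Mina margin map M : (0,∞) → (0,∞) satisfies M(s(x)) = M(x) for every x ∈ (0,∞). -/

import Mathlib

/-- `ω(x) = √(8x+1)`. -/
noncomputable def wF (x : ℝ) : ℝ := Real.sqrt (8 * x + 1)

/-- `c(x) = (ω+3)²/16`. -/
noncomputable def cF (x : ℝ) : ℝ := (wF x + 3) ^ 2 / 16

/-- `d(x) = (ω+3)²/(8(ω+1))`. -/
noncomputable def dF (x : ℝ) : ℝ := (wF x + 3) ^ 2 / (8 * (wF x + 1))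

/-- `s(x) = (ω−1)²/(4(ω+7))`. -/
noncomputable def sF (x : ℝ) : ℝ := (wF x - 1) ^ 2 / (4 * (wF x + 7))

/-- `s₋₁(x) = 1/s(1/x)`, the inverse of `s`. -/
noncomputable def sFinv (x : ℝ) : ℝ := 1 / sF (1 / x)

/-- The ℤ-indexed iterates of `s`. -/
noncomputable def sIter (k : ℤ) (x : ℝ) : ℝ :=
  if 0 ≤ k then sF^[k.toNat] x else sFinv^[(-k).toNat] x

/-- `P₀ = 1` and `P_{k+1} − P_k = ∏_{i=0}^{k} (c_i(x) − 1)`. -/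
noncomputable def Pfun (x : ℝ) : ℕ → ℝ
  | 0 => 1
  | k + 1 => Pfun x k + ∏ i ∈ Finset.range (k + 1), (cF (sIter i x) - 1)

/-- `S₀ = 1` and `S_{k+1} − S_k = ∏_{i=0}^{k} (d_i(x) − 1)`. -/
noncomputable def Sfun (x : ℝ) : ℕ → ℝ
  | 0 => 1
  | k + 1 => Sfun x k + ∏ i ∈ Finset.range (k + 1), (dF (sIter i x) - 1)

/-- `Q₁ = 0` and `Q_{k+1} − Q_k = ∏_{i=1}^{k} (c_{−i}(x) − 1)⁻¹` for `k ≥ 1`. -/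
noncomputable def Qfun (x : ℝ) : ℕ → ℝ
  | 0 => 0
  | 1 => 0
  | k + 2 => Qfun x (k + 1) + ∏ i ∈ Finset.range (k + 1), (cF (sIter (-((i : ℤ) + 1)) x) - 1)⁻¹

/-- `T₁ = 0` and `T_{k+1} − T_k = ∏_{i=1}^{k} (d_{−i}(x) − 1)⁻¹` for `k ≥ 1`. -/
noncomputable def Tfun (x : ℝ) : ℕ → ℝ
  | 0 => 0
  | 1 => 0
  | k + 2 => Tfun x (k + 1) + ∏ i ∈ Finset.range (k + 1), (dF (sIter (-((i : ℤ) + 1)) x) - 1)⁻¹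

/-- The finite-trail Mina margin map `M_{ℓ,k}(x) = x(S_k + T_ℓ)/(P_k + Q_ℓ)`. -/
noncomputable def Mfin (l k : ℕ) (x : ℝ) : ℝ :=
  x * (Sfun x k + Tfun x l) / (Pfun x k + Qfun x l)


/-!
Each of `P − 1`, `S − 1`, `Q`, `T` is a partial sum of a series `∑_j ∏_{i ≤ j} a_i` whose
factors tend to `0`: forwards `c_i − 1, d_i − 1 → 0` because `s(x) ≤ x/8` drives the orbit to
`0`, where `c = d = 1`; backwards `(c_{−i} − 1)⁻¹, (d_{−i} − 1)⁻¹ → 0` because `s₋₁ = 1/s(1/·)`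
drives it to `∞`. By the ratio test all four converge, so `M_{ℓ,k}(x)` has a positive limit as
`ℓ, k → ∞` independently. Replacing `x` by `s(x)` shifts the trail by one step:
`P_{k+3}(x) + Q_{k+1}(x) = (c(x) − 1)(P_{k+2}(s x) + Q_{k+2}(s x))`, and likewise for `S, T`
with `d`. Together with `s(x)(c(x) − 1) = x(d(x) − 1)` this gives
`M_{k+2,k+2}(s x) = M_{k+1,k+3}(x)`, which has the same limit.
-/

open Filter Finset Topology

section Coefficients

variable {x : ℝ}

lemma wF_sq (hx : 0 ≤ 8 * x + 1) : wF x ^ 2 = 8 * x + 1 := Real.sq_sqrt hx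

lemma one_lt_wF (hx : 0 < x) : 1 < wF x := by
  rw [wF, Real.lt_sqrt zero_le_one]
  linarith

lemma one_lt_cF (hx : 0 < x) : 1 < cF x := by
  have := one_lt_wF hx
  rw [cF, lt_div_iff₀ (by norm_num)]
  nlinarith

lemma one_lt_dF (hx : 0 < x) : 1 < dF x := by
  have := one_lt_wF hx
  rw [dF, lt_div_iff₀ (by linarith)]
  nlinarith

lemma wF_zero : wF 0 = 1 := by simp [wF]

lemma tendsto_cF_nhds_zero : Tendsto cF (𝓝 0) (𝓝 1) := by
  have : Continuous cF := by unfold cF wF; fun_prop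
  convert this.tendsto 0
  norm_num [cF, wF_zero]

lemma tendsto_dF_nhds_zero : Tendsto dF (𝓝 0) (𝓝 1) := by
  have : Continuous dF := by
    unfold dF wF
    exact Continuous.div (by fun_prop) (by fun_prop) fun y => by positivity
  convert this.tendsto 0
  norm_num [dF, wF_zero]

lemma tendsto_wF_atTop : Tendsto wF atTop atTop :=
  Real.tendsto_sqrt_atTop.comp <|
    tendsto_atTop_add_const_right _ 1 (tendsto_id.const_mul_atTop (by norm_num))

lemma tendsto_cF_atTop : Tendsto cF atTop atTop := by
  refine tendsto_atTop_mono (fun y => ?_) <|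
    (tendsto_atTop_add_const_right _ 3 tendsto_wF_atTop).atTop_div_const (by norm_num : (0:ℝ) < 16)
  have : 0 ≤ wF y := Real.sqrt_nonneg _
  rw [cF]
  gcongr
  nlinarith

lemma tendsto_dF_atTop : Tendsto dF atTop atTop := by
  refine tendsto_atTop_mono (fun y => ?_) <|
    (tendsto_atTop_add_const_right _ 3 tendsto_wF_atTop).atTop_div_const (by norm_num : (0:ℝ) < 8)
  have : 0 ≤ wF y := Real.sqrt_nonneg _
  rw [dF, div_le_div_iff₀ (by norm_num) (by positivity)]
  nlinarith

end Coefficients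

section Shift

variable {x : ℝ}

lemma sF_pos (hx : 0 < x) : 0 < sF x := by
  have := one_lt_wF hx
  exact div_pos (pow_pos (by linarith) 2) (by linarith)

lemma sF_le_div_eight (hx : 0 ≤ x) : sF x ≤ x / 8 := by
  have hw : 1 ≤ wF x := by rw [wF, Real.le_sqrt zero_le_one] <;> linarith
  have hsq := wF_sq (x := x) (by linarith)
  rw [sF, div_le_div_iff₀ (by linarith) (by norm_num)]
  nlinarith [sq_nonneg (wF x - 4)]

lemma sF_mul_cF_sub_one (hx : 0 ≤ 8 * x + 1) : sF x * (cF x - 1) = x * (dF x - 1) := by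
  have hsq := wF_sq hx
  have hw : 0 ≤ wF x := Real.sqrt_nonneg _
  rw [sF, cF, dF]
  generalize wF x = w at *
  have : w + 1 ≠ 0 := by positivity
  have : w + 7 ≠ 0 := by positivity
  field_simp
  linear_combination 8 * (w + 7) * (w - 1) ^ 2 * hsq

lemma sFinv_sF (hx : 0 < x) : sFinv (sF x) = x := by
  have hw := one_lt_wF hx
  have hsq := wF_sq (x := x) (by linarith)
  have hv : wF (1 / sF x) = (wF x + 15) / (wF x - 1) := by
    rw [wF, ← Real.sqrt_sq (show 0 ≤ (wF x + 15) / (wF x - 1) by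
      exact div_nonneg (by linarith) (by linarith))]
    congr 1
    rw [sF]
    generalize wF x = w at *
    have : w - 1 ≠ 0 := by linarith
    have : w + 7 ≠ 0 := by linarith
    field_simp
    ring
  have hs : sF (1 / sF x) = 1 / x := by
    rw [sF, hv]
    generalize wF x = w at *
    have : w - 1 ≠ 0 := by linarith
    have : x ≠ 0 := by linarith
    field_simp
    rw [div_eq_iff (by linarith)]
    linear_combination (-32) * hsq
  rw [sFinv, hs, one_div_one_div]

end Shift

section Iterates

variable {x : ℝ}

lemma mapsTo_sF : Set.MapsTo sF (Set.Ioi 0) (Set.Ioi 0) := fun _ hx => sF_pos hx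

lemma sF_iterate_le (hx : 0 < x) (n : ℕ) : sF^[n] x ≤ x / 8 ^ n := by
  induction n with
  | zero => simp
  | succ n ih =>
    rw [Function.iterate_succ_apply', pow_succ, ← div_div]
    exact (sF_le_div_eight (mapsTo_sF.iterate n hx).le).trans (by gcongr)

lemma tendsto_sF_iterate (hx : 0 < x) : Tendsto (fun n => sF^[n] x) atTop (𝓝[>] 0) := by
  refine tendsto_nhdsWithin_iff.2 ⟨?_, Eventually.of_forall fun n => mapsTo_sF.iterate n hx⟩
  refine squeeze_zero (fun n => (mapsTo_sF.iterate n hx).le) (sF_iterate_le hx) ?_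
  simpa [div_eq_mul_inv] using
    (tendsto_pow_atTop_nhds_zero_of_lt_one (by norm_num : (0:ℝ) ≤ 1 / 8) (by norm_num)).const_mul x

lemma sFinv_iterate (n : ℕ) (y : ℝ) : sFinv^[n] y = (sF^[n] y⁻¹)⁻¹ := by
  have : Function.Semiconj Inv.inv sF sFinv := fun y => by simp [sFinv]
  simpa using (this.iterate_right n y⁻¹).symm

lemma sIter_natCast (n : ℕ) (x : ℝ) : sIter n x = sF^[n] x := by
  simp [sIter]

lemma sIter_neg_natCast (n : ℕ) (x : ℝ) : sIter (-n) x = sFinv^[n] x := by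
  rcases n.eq_zero_or_pos with rfl | hn
  · simp [sIter]
  · rw [sIter, if_neg (by omega)]
    simp

lemma sIter_zero (x : ℝ) : sIter 0 x = x := by simp [sIter]

lemma sIter_pos (hx : 0 < x) (i : ℤ) : 0 < sIter i x := by
  obtain ⟨n, rfl | rfl⟩ := i.eq_nat_or_neg
  · rw [sIter_natCast]
    exact mapsTo_sF.iterate n hx
  · rw [sIter_neg_natCast, sFinv_iterate]
    exact inv_pos.2 (mapsTo_sF.iterate n (inv_pos.2 hx))

lemma tendsto_sIter_neg (hx : 0 < x) :
    Tendsto (fun n : ℕ => sIter (-n) x) atTop atTop := by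
  simp only [sIter_neg_natCast, sFinv_iterate]
  exact tendsto_inv_nhdsGT_zero.comp (tendsto_sF_iterate (inv_pos.2 hx))

lemma sIter_sF (hx : 0 < x) (i : ℤ) : sIter i (sF x) = sIter (i + 1) x := by
  obtain ⟨n, rfl | rfl⟩ := i.eq_nat_or_neg
  · rw [sIter_natCast, ← Nat.cast_succ, sIter_natCast, Function.iterate_succ_apply]
  · rcases n with _ | n
    · simp [sIter]
    · rw [show -((n + 1 : ℕ) : ℤ) + 1 = -n by push_cast; ring, sIter_neg_natCast,
        sIter_neg_natCast, Function.iterate_succ_apply, sFinv_sF hx]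

end Iterates

def trailSum {R : Type*} [CommSemiring R] (a : ℕ → R) (k : ℕ) : R :=
  ∑ j ∈ range k, ∏ i ∈ range (j + 1), a i

lemma trailSum_succ {R : Type*} [CommSemiring R] (a : ℕ → R) (k : ℕ) :
    trailSum a (k + 1) = a 0 * (1 + trailSum (fun i => a (i + 1)) k) := by
  simp only [trailSum, sum_range_succ', prod_range_succ' a, mul_add, mul_sum]
  simp [mul_comm, add_comm]

lemma exists_tendsto_trailSum {a : ℕ → ℝ} (ha : ∀ i, 0 < a i) (h : Tendsto a atTop (𝓝 0)) :
    ∃ L, 0 ≤ L ∧ Tendsto (trailSum a) atTop (𝓝 L) := by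
  have hprod (j : ℕ) : 0 < ∏ i ∈ range (j + 1), a i := prod_pos fun i _ => ha i
  have hratio : Tendsto (fun j => ‖∏ i ∈ range (j + 1 + 1), a i‖ / ‖∏ i ∈ range (j + 1), a i‖)
      atTop (𝓝 0) := by
    have := (h.comp (tendsto_add_atTop_nat 1)).norm
    rw [norm_zero] at this
    refine this.congr fun j => ?_
    rw [Function.comp_apply, prod_range_succ _ (j + 1), norm_mul,
      mul_div_cancel_left₀ _ (norm_ne_zero_iff.2 (hprod j).ne')]
  have hsum := summable_of_ratio_test_tendsto_lt_one zero_lt_one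
    (Eventually.of_forall fun j => (hprod j).ne') hratio
  exact ⟨_, tsum_nonneg fun j => (hprod j).le, hsum.hasSum.tendsto_sum_nat⟩

section OrbitTrails

variable {f : ℝ → ℝ} {x : ℝ}

lemma exists_tendsto_trailSum_forward (hf : ∀ y, 0 < y → 1 < f y)
    (hf0 : Tendsto f (𝓝 0) (𝓝 1)) (hx : 0 < x) :
    ∃ L, 0 ≤ L ∧ Tendsto (trailSum fun i : ℕ => f (sIter i x) - 1) atTop (𝓝 L) := by
  refine exists_tendsto_trailSum (fun i => sub_pos.2 (hf _ (sIter_pos hx i))) ?_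
  simpa [sIter_natCast] using
    (hf0.comp ((tendsto_sF_iterate hx).mono_right nhdsWithin_le_nhds)).sub_const 1

lemma exists_tendsto_trailSum_backward (hf : ∀ y, 0 < y → 1 < f y)
    (hf_top : Tendsto f atTop atTop) (hx : 0 < x) :
    ∃ L, 0 ≤ L ∧
      Tendsto (trailSum fun i : ℕ => (f (sIter (-((i : ℤ) + 1)) x) - 1)⁻¹) atTop (𝓝 L) := by
  refine exists_tendsto_trailSum (fun i => inv_pos.2 (sub_pos.2 (hf _ (sIter_pos hx _)))) ?_
  have := (tendsto_atTop_add_const_right _ (-1) hf_top).comp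
    ((tendsto_sIter_neg hx).comp (tendsto_add_atTop_nat 1))
  refine (tendsto_inv_atTop_zero.comp this).congr fun i => ?_
  simp [sub_eq_add_neg]

lemma trailSum_forward_succ (f : ℝ → ℝ) (x : ℝ) (k : ℕ) :
    trailSum (fun i : ℕ => f (sIter i x) - 1) (k + 1)
      = (f x - 1) * (1 + trailSum (fun i : ℕ => f (sIter i (sF x)) - 1) k) := by
  simp only [trailSum_succ, sIter_natCast, Function.iterate_succ_apply,
    Function.iterate_zero_apply]

lemma trailSum_backward_sF (hx : 0 < x) (k : ℕ) :
    trailSum (fun i : ℕ => (f (sIter (-((i : ℤ) + 1)) (sF x)) - 1)⁻¹) (k + 1)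
      = (f x - 1)⁻¹ *
          (1 + trailSum (fun i : ℕ => (f (sIter (-((i : ℤ) + 1)) x) - 1)⁻¹) k) := by
  simp only [trailSum_succ, sIter_sF hx]
  push_cast
  simp [sIter_zero]

end OrbitTrails

section MarginMap

variable {x : ℝ}

lemma Pfun_eq (x : ℝ) (k : ℕ) :
    Pfun x k = 1 + trailSum (fun i : ℕ => cF (sIter i x) - 1) k := by
  induction k with
  | zero => simp [Pfun, trailSum]
  | succ k ih => rw [Pfun, ih, trailSum, trailSum, sum_range_succ]; ring

lemma Sfun_eq (x : ℝ) (k : ℕ) :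
    Sfun x k = 1 + trailSum (fun i : ℕ => dF (sIter i x) - 1) k := by
  induction k with
  | zero => simp [Sfun, trailSum]
  | succ k ih => rw [Sfun, ih, trailSum, trailSum, sum_range_succ]; ring

lemma Qfun_succ_eq (x : ℝ) (k : ℕ) :
    Qfun x (k + 1) = trailSum (fun i : ℕ => (cF (sIter (-((i : ℤ) + 1)) x) - 1)⁻¹) k := by
  induction k with
  | zero => simp [Qfun, trailSum]
  | succ k ih => rw [Qfun, ih, trailSum, trailSum, sum_range_succ]

lemma Tfun_succ_eq (x : ℝ) (k : ℕ) :
    Tfun x (k + 1) = trailSum (fun i : ℕ => (dF (sIter (-((i : ℤ) + 1)) x) - 1)⁻¹) k := by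
  induction k with
  | zero => simp [Tfun, trailSum]
  | succ k ih => rw [Tfun, ih, trailSum, trailSum, sum_range_succ]

lemma exists_tendsto_Pfun (hx : 0 < x) : ∃ p, 1 ≤ p ∧ Tendsto (Pfun x) atTop (𝓝 p) := by
  obtain ⟨L, hL, h⟩ :=
    exists_tendsto_trailSum_forward (fun _ => one_lt_cF) tendsto_cF_nhds_zero hx
  exact ⟨1 + L, by linarith, (h.const_add 1).congr fun k => (Pfun_eq x k).symm⟩

lemma exists_tendsto_Sfun (hx : 0 < x) : ∃ s, 1 ≤ s ∧ Tendsto (Sfun x) atTop (𝓝 s) := by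
  obtain ⟨L, hL, h⟩ :=
    exists_tendsto_trailSum_forward (fun _ => one_lt_dF) tendsto_dF_nhds_zero hx
  exact ⟨1 + L, by linarith, (h.const_add 1).congr fun k => (Sfun_eq x k).symm⟩

lemma exists_tendsto_Qfun (hx : 0 < x) : ∃ q, 0 ≤ q ∧ Tendsto (Qfun x) atTop (𝓝 q) := by
  obtain ⟨L, hL, h⟩ := exists_tendsto_trailSum_backward (fun _ => one_lt_cF) tendsto_cF_atTop hx
  exact ⟨L, hL, (tendsto_add_atTop_iff_nat 1).1 (by simpa only [Qfun_succ_eq] using h)⟩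

lemma exists_tendsto_Tfun (hx : 0 < x) : ∃ t, 0 ≤ t ∧ Tendsto (Tfun x) atTop (𝓝 t) := by
  obtain ⟨L, hL, h⟩ := exists_tendsto_trailSum_backward (fun _ => one_lt_dF) tendsto_dF_atTop hx
  exact ⟨L, hL, (tendsto_add_atTop_iff_nat 1).1 (by simpa only [Tfun_succ_eq] using h)⟩

lemma exists_tendsto_Mfin (hx : 0 < x) :
    ∃ L, 0 < L ∧ Tendsto (fun lk : ℕ × ℕ => Mfin lk.1 lk.2 x) (atTop ×ˢ atTop) (𝓝 L) := by
  obtain ⟨p, hp, hP⟩ := exists_tendsto_Pfun hx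
  obtain ⟨q, hq, hQ⟩ := exists_tendsto_Qfun hx
  obtain ⟨s, hs, hS⟩ := exists_tendsto_Sfun hx
  obtain ⟨t, ht, hT⟩ := exists_tendsto_Tfun hx
  refine ⟨x * (s + t) / (p + q), div_pos (mul_pos hx (by linarith)) (by linarith), ?_⟩
  exact (((hS.comp tendsto_snd).add (hT.comp tendsto_fst)).const_mul x).div
    ((hP.comp tendsto_snd).add (hQ.comp tendsto_fst)) (by linarith)

lemma Pfun_add_Qfun_sF (hx : 0 < x) (m : ℕ) :
    Pfun x (m + 3) + Qfun x (m + 1)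
      = (cF x - 1) * (Pfun (sF x) (m + 2) + Qfun (sF x) (m + 2)) := by
  have hc : cF x - 1 ≠ 0 := (sub_pos.2 (one_lt_cF hx)).ne'
  rw [Pfun_eq, Pfun_eq, trailSum_forward_succ, Qfun_succ_eq, Qfun_succ_eq,
    trailSum_backward_sF hx]
  field_simp
  ring

lemma Sfun_add_Tfun_sF (hx : 0 < x) (m : ℕ) :
    Sfun x (m + 3) + Tfun x (m + 1)
      = (dF x - 1) * (Sfun (sF x) (m + 2) + Tfun (sF x) (m + 2)) := by
  have hd : dF x - 1 ≠ 0 := (sub_pos.2 (one_lt_dF hx)).ne'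
  rw [Sfun_eq, Sfun_eq, trailSum_forward_succ, Tfun_succ_eq, Tfun_succ_eq,
    trailSum_backward_sF hx]
  field_simp
  ring

lemma Mfin_sF (hx : 0 < x) (m : ℕ) :
    Mfin (m + 2) (m + 2) (sF x) = Mfin (m + 1) (m + 3) x := by
  have hc : cF x - 1 ≠ 0 := (sub_pos.2 (one_lt_cF hx)).ne'
  rw [Mfin, Mfin, Pfun_add_Qfun_sF hx, Sfun_add_Tfun_sF hx, ← mul_assoc,
    ← sF_mul_cF_sub_one (by linarith), mul_assoc, mul_left_comm (sF x), mul_div_mul_left _ _ hc]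

end MarginMap

/-- The Mina margin map: for every `x > 0` the limit `M(x) = lim_k M_{k,k}(x)` exists
as a positive real, and `M(s(x)) = M(x)`. -/
theorem mina_margin_limit_s_invariant (x : ℝ) (hx : 0 < x) :
    ∃ L : ℝ, 0 < L ∧
      Filter.Tendsto (fun k : ℕ => Mfin k k x) Filter.atTop (nhds L) ∧
      Filter.Tendsto (fun k : ℕ => Mfin k k (sF x)) Filter.atTop (nhds L) := by
  obtain ⟨L, hL, hM⟩ := exists_tendsto_Mfin hx
  refine ⟨L, hL, hM.comp (tendsto_id.prodMk tendsto_id), ?_⟩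
  rw [← tendsto_add_atTop_iff_nat 2]
  exact (hM.comp ((tendsto_add_atTop_nat 1).prodMk (tendsto_add_atTop_nat 3))).congr
    fun m => (Mfin_sF hx m).symm
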